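/- Let (Q_i)_{i=1}^d be a family of probability measures on (Ω, F(T)) such that for each i the i-th row S_i = (S_{i,j})_j of the exchange-matrix process is a Q_i-martingale (each entry real-valued and integrable under Q_i). Then there exists a valuation measure Q̄ with respect to the basket that is equivalent to ∑_i Q_i. Explicitly, one may take Q̄ = (1/d)·∑_i Q̃_i, where dQ̃_i/dQ_i = (∑_j S_{i,j}(T))/(∑_j S_{i,j}(0)). -/

import Mathlib

open MeasureTheory Filter Set Function
open scoped ENNReal

noncomputable section

/-- The product `x * y` of two elements of `[0,∞]` is defined unless `{x, y} = {0, ∞}`. -/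
def DefinedProd (x y : ℝ≥0∞) : Prop := ¬(x = 0 ∧ y = ∞) ∧ ¬(x = ∞ ∧ y = 0)

/-- An exchange matrix: a `d × d` matrix with entries in `[0,∞]` such that `s i i = 1` and
`s i j * s j k = s i k` whenever the product is defined. -/
structure IsExchangeMatrix {d : ℕ} (s : Fin d → Fin d → ℝ≥0∞) : Prop where
  diag : ∀ i, s i i = 1
  consistent : ∀ i j k, DefinedProd (s i j) (s j k) → s i j * s j k = s i k

/-- A value vector for an exchange matrix `s`: `s i j * v j = v i` whenever defined. -/
def IsValueVector {d : ℕ} (s : Fin d → Fin d → ℝ≥0∞) (v : Fin d → ℝ≥0∞) : Prop :=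
  ∀ i j, DefinedProd (s i j) (v j) → s i j * v j = v i

open Classical in
/-- The set of active indices of an exchange matrix: those whose row sum is finite. -/
def activeFinset {d : ℕ} (s : Fin d → Fin d → ℝ≥0∞) : Finset (Fin d) :=
  Finset.univ.filter fun i => ∑ j, s i j < ∞

/-- The market model of the paper: a right-continuous filtration `F` (with `F 0` trivial) on
`[0,T]`, and a right-continuous adapted process `S` of exchange matrices with deterministic
initial value `S0` all of whose rows are finite (no currency has devalued at time `0`). -/
structure MarketModel (d : ℕ) (Ω : Type*) [mΩ : MeasurableSpace Ω] (T : ℝ) where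
  F : Filtration ℝ mΩ
  S : ℝ → Ω → Fin d → Fin d → ℝ≥0∞
  S0 : Fin d → Fin d → ℝ≥0∞
  T_pos : 0 < T
  rc_F : ∀ t ∈ Set.Ico (0 : ℝ) T, (⨅ u ∈ Set.Ioi t, F u) ≤ F t
  trivial_F0 : ∀ A : Set Ω, MeasurableSet[F 0] A → A = ∅ ∨ A = Set.univ
  adapted_S : ∀ t ∈ Set.Icc (0 : ℝ) T, ∀ i j, Measurable[F t] fun ω => S t ω i j
  rc_S : ∀ ω i j, ∀ t ∈ Set.Ico (0 : ℝ) T,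
    Tendsto (fun u => S u ω i j) (nhdsWithin t (Set.Ioi t)) (nhds (S t ω i j))
  exchange_S : ∀ t ∈ Set.Icc (0 : ℝ) T, ∀ ω, IsExchangeMatrix fun i j => S t ω i j
  init_S : ∀ ω, S 0 ω = S0
  active_S0 : ∀ i, ∑ j, S0 i j < ∞

namespace MarketModel

variable {d : ℕ} {Ω : Type*} [mΩ : MeasurableSpace Ω] {T : ℝ}

/-- Basket-quoted price of the `i`-th currency. -/
def Sbar (M : MarketModel d Ω T) (i : Fin d) (t : ℝ) (ω : Ω) : ℝ≥0∞ :=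
  (∑ j, M.S t ω i j)⁻¹

/-- The (random) set of active currencies at time `t`. -/
def active (M : MarketModel d Ω T) (t : ℝ) (ω : Ω) : Finset (Fin d) :=
  activeFinset fun i j => M.S t ω i j

/-- The payoff of a claim `C` in terms of the basket:
`C̄ = (1/|A(T)|) ∑_{j ∈ A(T)} S̄_j(T) C_j`. -/
def Cbar (M : MarketModel d Ω T) (C : Ω → Fin d → ℝ≥0∞) (ω : Ω) : ℝ≥0∞ :=
  ((M.active T ω).card : ℝ≥0∞)⁻¹ * ∑ j ∈ M.active T ω, M.Sbar j T ω * C ω j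

/-- A contingent claim: an `F(T)`-measurable value vector for `S(T)`. -/
def IsClaim (M : MarketModel d Ω T) (C : Ω → Fin d → ℝ≥0∞) : Prop :=
  (∀ i, Measurable fun ω => C ω i) ∧
  ∀ ω, IsValueVector (fun i j => M.S T ω i j) (C ω)

end MarketModel

/-- A real-valued martingale on the time interval `[0, T]`. -/
def MartingaleOn {Ω : Type*} {mΩ : MeasurableSpace Ω} (F : Filtration ℝ mΩ)
    (Q : Measure Ω) (X : ℝ → Ω → ℝ) (T : ℝ) : Prop :=
  (∀ t ∈ Set.Icc (0 : ℝ) T, StronglyMeasurable[F t] (X t) ∧ Integrable (X t) Q) ∧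
  ∀ r ∈ Set.Icc (0 : ℝ) T, ∀ t ∈ Set.Icc (0 : ℝ) T, r ≤ t → Q[X t|F r] =ᵐ[Q] X r

/-- A real-valued supermartingale on the time interval `[0, T]`. -/
def SupermartingaleOn {Ω : Type*} {mΩ : MeasurableSpace Ω} (F : Filtration ℝ mΩ)
    (Q : Measure Ω) (X : ℝ → Ω → ℝ) (T : ℝ) : Prop :=
  (∀ t ∈ Set.Icc (0 : ℝ) T, StronglyMeasurable[F t] (X t) ∧ Integrable (X t) Q) ∧
  ∀ r ∈ Set.Icc (0 : ℝ) T, ∀ t ∈ Set.Icc (0 : ℝ) T, r ≤ t → Q[X t|F r] ≤ᵐ[Q] X r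

/-- A local martingale on `[0, T]`: there is a nondecreasing sequence of stopping times
with `Q(lim_n τ_n > T) = 1` such that each stopped process is a martingale on `[0, T]`. -/
def LocalMartingaleOn {Ω : Type*} {mΩ : MeasurableSpace Ω} (F : Filtration ℝ mΩ)
    (Q : Measure Ω) (X : ℝ → Ω → ℝ) (T : ℝ) : Prop :=
  ∃ τ : ℕ → Ω → ℝ,
    (∀ n, IsStoppingTime F (fun ω => (τ n ω : WithTop ℝ))) ∧
    (∀ n ω, τ n ω ≤ τ (n + 1) ω) ∧
    (∀ᵐ ω ∂Q, ∃ n, T < τ n ω) ∧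
    ∀ n, MartingaleOn F Q (fun t ω => X (min t (τ n ω)) ω) T

/-- A numéraire-consistent family of probability measures:
`E^{Q_i}[S_{i,j}(t) 1_A] = S_{i,j}(0) Q_j(A ∩ {S_{j,i}(t) > 0})`. -/
def NumeraireConsistent {d : ℕ} {Ω : Type*} [mΩ : MeasurableSpace Ω] {T : ℝ}
    (M : MarketModel d Ω T) (Q : Fin d → Measure Ω) : Prop :=
  (∀ i, IsProbabilityMeasure (Q i)) ∧
  ∀ i j : Fin d, ∀ t ∈ Set.Icc (0 : ℝ) T, ∀ A : Set Ω, MeasurableSet[M.F t] A →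
    ∫⁻ ω in A, M.S t ω i j ∂(Q i) = M.S0 i j * Q j (A ∩ {ω | 0 < M.S t ω j i})

/-- A valuation measure with respect to the basket: the basket-quoted prices form a
`Q̄`-martingale on `[0, T]`. -/
def IsValuationMeasure {d : ℕ} {Ω : Type*} [mΩ : MeasurableSpace Ω] {T : ℝ}
    (M : MarketModel d Ω T) (Qb : Measure Ω) : Prop :=
  IsProbabilityMeasure Qb ∧
  ∀ i, MartingaleOn M.F Qb (fun t ω => (M.Sbar i t ω).toReal) T

/-- The aggregation valuation formula
`E^{Q̄}[C̄ | F(r)] = ∑_{j ∈ A(r)} S̄_j(r) E^{Q_j}[C_j / |A(T)| | F(r)]`. -/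
def AggregationFormula {d : ℕ} {Ω : Type*} [mΩ : MeasurableSpace Ω] {T : ℝ}
    (M : MarketModel d Ω T) (Qb : Measure Ω) (Q : Fin d → Measure Ω)
    (C : Ω → Fin d → ℝ≥0∞) (r : ℝ) : Prop :=
  Qb[fun ω => (M.Cbar C ω).toReal|M.F r] =ᵐ[Qb] fun ω =>
    ∑ j, Set.indicator {ω' | ∑ k, M.S r ω' j k < ∞}
      (fun ω' => (M.Sbar j r ω').toReal *
        ((Q j)[fun ω'' => (C ω'' j / ((M.active T ω'').card : ℝ≥0∞)).toReal|M.F r]) ω') ω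

/-- An `[0,∞]`-valued process jumps to zero on `[0, T]`: it is zero at some time `t ∈ [0, T]`
while its left limit at `t` is strictly positive. -/
def JumpsToZeroOn (X : ℝ → ℝ≥0∞) (T : ℝ) : Prop :=
  ∃ t ∈ Set.Icc (0 : ℝ) T, X t = 0 ∧ 0 < Function.leftLim X t

/-- A `[0,∞]`-valued stopping time. -/
def IsStoppingTimeE {Ω : Type*} {mΩ : MeasurableSpace Ω} (F : Filtration ℝ mΩ)
    (τ : Ω → ℝ≥0∞) : Prop :=
  ∀ t : ℝ, 0 ≤ t → MeasurableSet[F t] {ω | τ ω ≤ ENNReal.ofReal t}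

/-- Membership in the σ-algebra `F(τ)` for a `[0,∞]`-valued stopping time `τ`. -/
def MeasurableSetAtE {Ω : Type*} {mΩ : MeasurableSpace Ω} (F : Filtration ℝ mΩ)
    (τ : Ω → ℝ≥0∞) (A : Set Ω) : Prop :=
  MeasurableSet A ∧ ∀ t : ℝ, 0 ≤ t → MeasurableSet[F t] (A ∩ {ω | τ ω ≤ ENNReal.ofReal t})

/-- A predictable time: a stopping time announced by a nondecreasing sequence of stopping
times converging to it and strictly smaller than it on its finiteness set. -/
def IsPredictableTimeE {Ω : Type*} {mΩ : MeasurableSpace Ω} (F : Filtration ℝ mΩ)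
    (σ : Ω → ℝ≥0∞) : Prop :=
  IsStoppingTimeE F σ ∧
  ∃ a : ℕ → Ω → ℝ≥0∞,
    (∀ n, IsStoppingTimeE F (a n)) ∧
    (∀ n ω, a n ω ≤ a (n + 1) ω) ∧
    (∀ ω, (⨆ n, a n ω) = σ ω) ∧
    ∀ n ω, 0 < σ ω → σ ω < ∞ → a n ω < σ ω

/-- No Obvious Devaluations: for every currency `i` and stopping time `τ`,
`P(i ∈ A(T) | F(τ)) > 0` almost surely on `{τ < ∞} ∩ {i ∈ A(τ)}`, formulated via
`F(τ)`-measurable subsets of that event. -/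
def NOD {d : ℕ} {Ω : Type*} [mΩ : MeasurableSpace Ω] {T : ℝ}
    (M : MarketModel d Ω T) (P : Measure Ω) : Prop :=
  ∀ i : Fin d, ∀ τ : Ω → ℝ≥0∞, IsStoppingTimeE M.F τ →
    ∀ A : Set Ω, MeasurableSetAtE M.F τ A →
      (∀ ω ∈ A, τ ω < ∞ ∧ ∑ j, M.S (τ ω).toReal ω i j < ∞) →
      0 < P A → 0 < P (A ∩ {ω | ∑ j, M.S T ω i j < ∞})

/-!
Put `Z k t = (∑ j, S k j (t)) / ∑ j, S k j (0)`. As a sum of the martingales in row `k`, `Z k` is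
a positive `Q k`-martingale of mean one, so `Q̃ k = (Q k).withDensity (Z k T)` is a probability
measure equivalent to `Q k`. Where currency `k` has not devalued, the exchange identity
`S̄ i * ∑ j, S k j = S k i` holds, so for `A ∈ F(t)` the tower property of `Z k` gives
`E^{Q̃ k}[S̄ i (t) 1_A] = E^{Q k}[S k i (t) 1_A] / ∑ j, S k j (0)`. For `A ∈ F(r)` with `r ≤ t`
the right-hand side does not depend on `t`, because `S k i` is a `Q k`-martingale; averaging
over `k` makes `S̄ i` a `Q̄`-martingale. Lower Lebesgue integrals are used throughout, so that
devalued entries `S i k = ∞` need no special treatment.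
-/

namespace IsExchangeMatrix

variable {d : ℕ} {s : Fin d → Fin d → ℝ≥0∞}

lemma one_le_rowSum (hs : IsExchangeMatrix s) (i : Fin d) : 1 ≤ ∑ j, s i j :=
  hs.diag i ▸ Finset.single_le_sum (fun _ _ => zero_le) (Finset.mem_univ i)

lemma rowSum_ne_zero (hs : IsExchangeMatrix s) (i : Fin d) : ∑ j, s i j ≠ 0 :=
  (one_pos.trans_le (hs.one_le_rowSum i)).ne'

lemma eq_inv_of_ne_top (hs : IsExchangeMatrix s) {i k : Fin d} (hki : s k i ≠ ∞) :
    s i k = (s k i)⁻¹ := by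
  rcases eq_or_ne (s k i) 0 with h0 | h0
  · by_contra hik
    have h := hs.consistent i k i ⟨fun h => hki h.2, fun h => hik (h.1.trans (by simp [h0]))⟩
    rw [h0, mul_zero, hs.diag] at h
    exact zero_ne_one h
  · exact ENNReal.eq_inv_of_mul_eq_one_left <|
      (hs.consistent i k i ⟨fun h => hki h.2, fun h => h0 h.2⟩).trans (hs.diag i)

lemma rowSum_eq_mul_rowSum (hs : IsExchangeMatrix s) (i : Fin d) {k : Fin d}
    (hk : ∀ j, s k j ≠ ∞) : ∑ j, s i j = s i k * ∑ j, s k j := by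
  have hik := hs.eq_inv_of_ne_top (hk i)
  rcases eq_or_ne (s k i) 0 with h0 | h0
  · have htop : s i k = ∞ := by simp [hik, h0]
    have hsum : ∑ j, s i j = ∞ :=
      top_le_iff.mp (htop ▸ Finset.single_le_sum (fun _ _ => zero_le) (Finset.mem_univ k))
    rw [hsum, htop, ENNReal.top_mul (hs.rowSum_ne_zero k)]
  · have hik0 : s i k ≠ 0 := by simpa [hik] using hk i
    have hiktop : s i k ≠ ∞ := by simpa [hik] using h0
    rw [Finset.mul_sum]
    exact Finset.sum_congr rfl fun j _ =>
      (hs.consistent i k j ⟨fun h => hik0 h.1, fun h => hiktop h.1⟩).symm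

lemma inv_rowSum_mul_rowSum (hs : IsExchangeMatrix s) (i : Fin d) {k : Fin d}
    (hk : ∀ j, s k j ≠ ∞) : (∑ j, s i j)⁻¹ * ∑ j, s k j = s k i := by
  have hpos := hs.rowSum_ne_zero k
  have hfin : ∑ j, s k j ≠ ∞ := ENNReal.sum_ne_top.mpr fun j _ => hk j
  rw [hs.rowSum_eq_mul_rowSum i hk, ENNReal.mul_inv (Or.inr hfin) (Or.inr hpos),
    hs.eq_inv_of_ne_top (hk i), inv_inv, mul_assoc, ENNReal.inv_mul_cancel hpos hfin, mul_one]

end IsExchangeMatrix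

section LIntegralMartingale

variable {Ω : Type*} {mΩ : MeasurableSpace Ω} {F : Filtration ℝ mΩ} {Q : Measure Ω} {T : ℝ}

lemma martingaleOn_toReal_of_setLIntegral_eq [IsFiniteMeasure Q] {X : ℝ → Ω → ℝ≥0∞}
    (hX : ∀ t ∈ Icc 0 T, Measurable[F t] (X t))
    (hfin : ∀ t ∈ Icc 0 T, ∫⁻ ω, X t ω ∂Q ≠ ∞)
    (hset : ∀ r ∈ Icc 0 T, ∀ t ∈ Icc 0 T, r ≤ t → ∀ A, MeasurableSet[F r] A →
      ∫⁻ ω in A, X t ω ∂Q = ∫⁻ ω in A, X r ω ∂Q) :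
    MartingaleOn F Q (fun t ω => (X t ω).toReal) T := by
  have hXm : ∀ t ∈ Icc 0 T, Measurable (X t) := fun t ht => (hX t ht).mono (F.le t) le_rfl
  have hint : ∀ t ∈ Icc 0 T, Integrable (fun ω => (X t ω).toReal) Q := fun t ht =>
    integrable_toReal_of_lintegral_ne_top (hXm t ht).aemeasurable (hfin t ht)
  have hsetInt : ∀ t ∈ Icc 0 T, ∀ A,
      ∫ ω in A, (X t ω).toReal ∂Q = (∫⁻ ω in A, X t ω ∂Q).toReal := fun t ht A =>
    integral_toReal (hXm t ht).aemeasurable.restrict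
      (ae_restrict_of_ae (ae_lt_top (hXm t ht) (hfin t ht)))
  refine ⟨fun t ht => ⟨(hX t ht).ennreal_toReal.stronglyMeasurable, hint t ht⟩,
    fun r hr t ht hrt => ?_⟩
  refine (ae_eq_condExp_of_forall_setIntegral_eq (F.le r) (hint t ht)
    (fun _ _ _ => (hint r hr).integrableOn) (fun A hA _ => ?_)
    (hX r hr).ennreal_toReal.stronglyMeasurable.aestronglyMeasurable).symm
  rw [hsetInt t ht, hsetInt r hr, hset r hr t ht hrt A hA]

namespace MartingaleOn

variable {Y : ℝ → Ω → ℝ≥0∞}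

lemma aemeasurable_of_ae_ne_top (hY : MartingaleOn F Q (fun t ω => (Y t ω).toReal) T)
    {t : ℝ} (ht : t ∈ Icc 0 T) (hfin : ∀ᵐ ω ∂Q, Y t ω ≠ ∞) : AEMeasurable (Y t) Q := by
  refine ((hY.1 t ht).1.measurable.mono (F.le t) le_rfl).ennreal_ofReal.aemeasurable.congr ?_
  filter_upwards [hfin] with ω hω using ENNReal.ofReal_toReal hω

lemma setLIntegral_eq_of_ae_ne_top [IsFiniteMeasure Q]
    (hY : MartingaleOn F Q (fun t ω => (Y t ω).toReal) T)
    (hfin : ∀ t ∈ Icc 0 T, ∀ᵐ ω ∂Q, Y t ω ≠ ∞) {s t : ℝ} (hs : s ∈ Icc 0 T)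
    (ht : t ∈ Icc 0 T) (hst : s ≤ t) {A : Set Ω} (hA : MeasurableSet[F s] A) :
    ∫⁻ ω in A, Y t ω ∂Q = ∫⁻ ω in A, Y s ω ∂Q := by
  have hofReal : ∀ u ∈ Icc 0 T,
      ∫⁻ ω in A, Y u ω ∂Q = ENNReal.ofReal (∫ ω in A, (Y u ω).toReal ∂Q) := fun u hu => by
    rw [ofReal_integral_eq_lintegral_ofReal (hY.1 u hu).2.integrableOn
      (ae_of_all _ fun _ => ENNReal.toReal_nonneg)]
    refine lintegral_congr_ae (ae_restrict_of_ae ?_)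
    filter_upwards [hfin u hu] with ω hω using (ENNReal.ofReal_toReal hω).symm
  rw [hofReal t ht, hofReal s hs, ← setIntegral_condExp (F.le s) (hY.1 t ht).2 hA,
    integral_congr_ae (ae_restrict_of_ae (hY.2 s hs t ht hst))]

lemma lintegral_mul_eq_of_ae_ne_top [IsFiniteMeasure Q]
    (hY : MartingaleOn F Q (fun t ω => (Y t ω).toReal) T)
    (hfin : ∀ t ∈ Icc 0 T, ∀ᵐ ω ∂Q, Y t ω ≠ ∞) {s t : ℝ} (hs : s ∈ Icc 0 T)
    (ht : t ∈ Icc 0 T) (hst : s ≤ t) {g : Ω → ℝ≥0∞} (hg : Measurable[F s] g) :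
    ∫⁻ ω, g ω * Y t ω ∂Q = ∫⁻ ω, g ω * Y s ω ∂Q := by
  have hm := F.le s
  have htrim : (Q.withDensity (Y t)).trim hm = (Q.withDensity (Y s)).trim hm := by
    refine @Measure.ext _ (F s) _ _ fun A hA => ?_
    rw [trim_measurableSet_eq hm hA, trim_measurableSet_eq hm hA,
      withDensity_apply _ (hm A hA), withDensity_apply _ (hm A hA)]
    exact hY.setLIntegral_eq_of_ae_ne_top hfin hs ht hst hA
  have hdensity : ∀ u ∈ Icc 0 T,
      ∫⁻ ω, g ω * Y u ω ∂Q = ∫⁻ ω, g ω ∂(Q.withDensity (Y u)).trim hm := fun u hu => by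
    rw [lintegral_trim hm hg, lintegral_withDensity_eq_lintegral_mul₀
      (hY.aemeasurable_of_ae_ne_top hu (hfin u hu)) (hg.mono hm le_rfl).aemeasurable]
    simp only [Pi.mul_apply, mul_comm]
  rw [hdensity t ht, hdensity s hs, htrim]

lemma lintegral_mul_sum_eq_of_ae_ne_top [IsFiniteMeasure Q] {ι : Type*} [Fintype ι]
    {Y : ι → ℝ → Ω → ℝ≥0∞} (hY : ∀ j, MartingaleOn F Q (fun t ω => (Y j t ω).toReal) T)
    (hfin : ∀ t ∈ Icc 0 T, ∀ j, ∀ᵐ ω ∂Q, Y j t ω ≠ ∞) {s t : ℝ} (hs : s ∈ Icc 0 T)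
    (ht : t ∈ Icc 0 T) (hst : s ≤ t) {g : Ω → ℝ≥0∞} (hg : Measurable[F s] g) :
    ∫⁻ ω, g ω * ∑ j, Y j t ω ∂Q = ∫⁻ ω, g ω * ∑ j, Y j s ω ∂Q := by
  have hmeas : ∀ u ∈ Icc 0 T, ∀ j, AEMeasurable (fun ω => g ω * Y j u ω) Q := fun u hu j =>
    (hg.mono (F.le s) le_rfl).aemeasurable.mul
      ((hY j).aemeasurable_of_ae_ne_top hu (hfin u hu j))
  simp only [Finset.mul_sum]
  rw [lintegral_finsetSum' _ fun j _ => hmeas t ht j,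
    lintegral_finsetSum' _ fun j _ => hmeas s hs j]
  exact Finset.sum_congr rfl fun j _ =>
    (hY j).lintegral_mul_eq_of_ae_ne_top (fun u hu => hfin u hu j) hs ht hst hg

end MartingaleOn

end LIntegralMartingale

lemma MeasureTheory.isProbabilityMeasure_inv_card_smul_sum {Ω ι : Type*} {_ : MeasurableSpace Ω}
    [Fintype ι] [Nonempty ι] (μ : ι → Measure Ω) [∀ i, IsProbabilityMeasure (μ i)] :
    IsProbabilityMeasure ((Fintype.card ι : ℝ≥0∞)⁻¹ • ∑ i, μ i) := by
  constructor
  simp [Measure.finsetSum_apply, ENNReal.inv_mul_cancel]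

lemma MeasureTheory.setLIntegral_smul_sum {Ω ι : Type*} {_ : MeasurableSpace Ω} [Fintype ι]
    (c : ℝ≥0∞) (μ : ι → Measure Ω) {A : Set Ω} (hA : MeasurableSet A) (f : Ω → ℝ≥0∞) :
    ∫⁻ ω in A, f ω ∂(c • ∑ i, μ i) = c * ∑ i, ∫⁻ ω in A, f ω ∂μ i := by
  simp only [← lintegral_indicator hA, lintegral_smul_measure, lintegral_finsetSum_measure,
    smul_eq_mul]

lemma MeasureTheory.Measure.AbsolutelyContinuous.finsetSum {Ω ι : Type*} {_ : MeasurableSpace Ω}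
    [Fintype ι] {μ ν : ι → Measure Ω} (h : ∀ i, μ i ≪ ν i) : ∑ i, μ i ≪ ∑ i, ν i := by
  simp only [← Measure.sum_fintype]
  exact Measure.absolutelyContinuous_sum_left fun i =>
    (h i).trans (Measure.absolutelyContinuous_sum_right i .rfl)

namespace MarketModel

variable {d : ℕ} {Ω : Type*} [MeasurableSpace Ω] {T : ℝ}

lemma zero_mem_Icc (M : MarketModel d Ω T) : (0 : ℝ) ∈ Icc 0 T := ⟨le_rfl, M.T_pos.le⟩

lemma T_mem_Icc (M : MarketModel d Ω T) : T ∈ Icc 0 T := ⟨M.T_pos.le, le_rfl⟩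

lemma isExchangeMatrix_S0 (M : MarketModel d Ω T) [Nonempty Ω] : IsExchangeMatrix M.S0 := by
  obtain ⟨ω⟩ := ‹Nonempty Ω›
  simpa [M.init_S ω] using M.exchange_S 0 M.zero_mem_Icc ω

lemma Sbar_le_one (M : MarketModel d Ω T) {t : ℝ} (ht : t ∈ Icc 0 T) (i : Fin d) (ω : Ω) :
    M.Sbar i t ω ≤ 1 :=
  ENNReal.inv_le_one.mpr ((M.exchange_S t ht ω).one_le_rowSum i)

lemma measurable_Sbar (M : MarketModel d Ω T) {t : ℝ} (ht : t ∈ Icc 0 T) (i : Fin d) :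
    Measurable[M.F t] (M.Sbar i t) :=
  (Finset.measurable_sum Finset.univ fun j _ => M.adapted_S t ht i j).inv

lemma measurable_rowSum (M : MarketModel d Ω T) {t : ℝ} (ht : t ∈ Icc 0 T) (i : Fin d) :
    Measurable fun ω => ∑ j, M.S t ω i j :=
  Finset.measurable_sum Finset.univ fun j _ => (M.adapted_S t ht i j).mono (M.F.le t) le_rfl

lemma absolutelyContinuous_withDensity_rowSum (M : MarketModel d Ω T) (Q : Measure Ω) (k : Fin d) :
    Q ≪ Q.withDensity fun ω => (∑ j, M.S T ω k j) / ∑ j, M.S0 k j :=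
  withDensity_absolutelyContinuous' ((M.measurable_rowSum M.T_mem_Icc k).div_const _).aemeasurable
    (ae_of_all _ fun ω => (ENNReal.div_pos_iff.mpr
      ⟨(M.exchange_S T M.T_mem_Icc ω).rowSum_ne_zero k, (M.active_S0 k).ne⟩).ne')

variable {M : MarketModel d Ω T} {Q : Measure Ω} {k : Fin d}

lemma setLIntegral_Sbar_withDensity [IsFiniteMeasure Q]
    (hmart : ∀ j, MartingaleOn M.F Q (fun t ω => (M.S t ω k j).toReal) T)
    (hfin : ∀ t ∈ Icc 0 T, ∀ j, ∀ᵐ ω ∂Q, M.S t ω k j ≠ ∞) (i : Fin d) {t : ℝ}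
    (ht : t ∈ Icc 0 T) {A : Set Ω} (hA : MeasurableSet[M.F t] A) :
    ∫⁻ ω in A, M.Sbar i t ω ∂(Q.withDensity fun ω => (∑ j, M.S T ω k j) / ∑ j, M.S0 k j) =
      (∑ j, M.S0 k j)⁻¹ * ∫⁻ ω in A, M.S t ω k i ∂Q := by
  have hA' := M.F.le t A hA
  have hg : Measurable[M.F t] (A.indicator (M.Sbar i t)) := (M.measurable_Sbar ht i).indicator hA
  have hexchange : ∀ᵐ ω ∂Q, A.indicator (M.Sbar i t) ω * ∑ j, M.S t ω k j =
      A.indicator (fun ω => M.S t ω k i) ω := by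
    filter_upwards [ae_all_iff.mpr (hfin t ht)] with ω hω
    by_cases hωA : ω ∈ A
    · simp only [indicator_of_mem hωA]
      exact (M.exchange_S t ht ω).inv_rowSum_mul_rowSum i hω
    · simp [indicator_of_notMem hωA]
  calc ∫⁻ ω in A, M.Sbar i t ω ∂(Q.withDensity fun ω => (∑ j, M.S T ω k j) / ∑ j, M.S0 k j)
      = ∫⁻ ω, (∑ j, M.S T ω k j) / (∑ j, M.S0 k j) * A.indicator (M.Sbar i t) ω ∂Q := by
        rw [← lintegral_indicator hA', lintegral_withDensity_eq_lintegral_mul _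
          ((M.measurable_rowSum M.T_mem_Icc k).div_const _) (hg.mono (M.F.le t) le_rfl)]
        rfl
    _ = (∑ j, M.S0 k j)⁻¹ * ∫⁻ ω, A.indicator (M.Sbar i t) ω * ∑ j, M.S T ω k j ∂Q := by
        have hmeas : Measurable fun ω => A.indicator (M.Sbar i t) ω * ∑ j, M.S T ω k j :=
          (hg.mono (M.F.le t) le_rfl).mul (M.measurable_rowSum M.T_mem_Icc k)
        rw [← lintegral_const_mul _ hmeas]
        simp only [div_eq_mul_inv]
        congr 1; ext ω; ring
    _ = (∑ j, M.S0 k j)⁻¹ * ∫⁻ ω, A.indicator (M.Sbar i t) ω * ∑ j, M.S t ω k j ∂Q := by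
        rw [MartingaleOn.lintegral_mul_sum_eq_of_ae_ne_top hmart hfin ht M.T_mem_Icc ht.2 hg]
    _ = (∑ j, M.S0 k j)⁻¹ * ∫⁻ ω in A, M.S t ω k i ∂Q := by
        rw [lintegral_congr_ae hexchange, lintegral_indicator hA']

lemma isProbabilityMeasure_withDensity_rowSum [IsProbabilityMeasure Q]
    (hmart : ∀ j, MartingaleOn M.F Q (fun t ω => (M.S t ω k j).toReal) T)
    (hfin : ∀ t ∈ Icc 0 T, ∀ j, ∀ᵐ ω ∂Q, M.S t ω k j ≠ ∞) :
    IsProbabilityMeasure (Q.withDensity fun ω => (∑ j, M.S T ω k j) / ∑ j, M.S0 k j) := by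
  have := nonempty_of_isProbabilityMeasure Q
  constructor
  rw [withDensity_apply _ MeasurableSet.univ, Measure.restrict_univ]
  calc ∫⁻ ω, (∑ j, M.S T ω k j) / ∑ j, M.S0 k j ∂Q
      = ∫⁻ ω, (∑ j, M.S0 k j)⁻¹ * ∑ j, M.S T ω k j ∂Q := by simp only [div_eq_mul_inv, mul_comm]
    _ = ∫⁻ ω, (∑ j, M.S0 k j)⁻¹ * ∑ j, M.S 0 ω k j ∂Q :=
        MartingaleOn.lintegral_mul_sum_eq_of_ae_ne_top hmart hfin M.zero_mem_Icc M.T_mem_Icc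
          M.T_pos.le measurable_const
    _ = 1 := by simp [M.init_S, ENNReal.inv_mul_cancel (M.isExchangeMatrix_S0.rowSum_ne_zero k)
      (M.active_S0 k).ne]

end MarketModel

/-- Theorem, aggregation without consistency, case (a): if each row `S_i` is a
`Q_i`-martingale (real-valued and integrable), then
`Q̄ = (1/d) ∑ i Q̃_i` with `dQ̃_i/dQ_i = (∑_j S_{i,j}(T))/(∑_j S_{i,j}(0))` is a valuation
measure with respect to the basket, equivalent to `∑ i, Q i`. -/
theorem aggregation_of_martingale_rows {d : ℕ} {Ω : Type*} [MeasurableSpace Ω] {T : ℝ}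
    (hd : 0 < d) (M : MarketModel d Ω T) (Q : Fin d → Measure Ω)
    (hprob : ∀ i, IsProbabilityMeasure (Q i))
    (hmart : ∀ i j, MartingaleOn M.F (Q i) (fun t ω => (M.S t ω i j).toReal) T)
    (hfin : ∀ i, ∀ t ∈ Set.Icc (0 : ℝ) T, ∀ j, ∀ᵐ ω ∂(Q i), M.S t ω i j ≠ ∞) :
    ∃ Qb : Measure Ω,
      Qb = (d : ℝ≥0∞)⁻¹ • ∑ i, (Q i).withDensity
          (fun ω => (∑ j, M.S T ω i j) / (∑ j, M.S0 i j)) ∧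
      IsValuationMeasure M Qb ∧ Qb ≪ (∑ i, Q i) ∧ (∑ i, Q i) ≪ Qb := by
  have : NeZero d := ⟨hd.ne'⟩
  have := fun k => MarketModel.isProbabilityMeasure_withDensity_rowSum (hmart k) (hfin k)
  have hQb := isProbabilityMeasure_inv_card_smul_sum
    fun k : Fin d => (Q k).withDensity fun ω => (∑ j, M.S T ω k j) / ∑ j, M.S0 k j
  rw [Fintype.card_fin] at hQb
  refine ⟨_, rfl, ⟨hQb, fun i => ?_⟩, ?_, ?_⟩
  · refine martingaleOn_toReal_of_setLIntegral_eq (fun t ht => M.measurable_Sbar ht i)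
      (fun t ht => ne_top_of_le_ne_top (by simp) (lintegral_mono (M.Sbar_le_one ht i)))
      fun r hr t ht hrt A hA => ?_
    rw [setLIntegral_smul_sum _ _ (M.F.le r A hA), setLIntegral_smul_sum _ _ (M.F.le r A hA)]
    refine congrArg _ (Finset.sum_congr rfl fun k _ => ?_)
    rw [MarketModel.setLIntegral_Sbar_withDensity (hmart k) (hfin k) i ht (M.F.mono hrt A hA),
      MarketModel.setLIntegral_Sbar_withDensity (hmart k) (hfin k) i hr hA,
      (hmart k i).setLIntegral_eq_of_ae_ne_top (fun u hu => hfin k u hu i) hr ht hrt hA]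
  · exact Measure.smul_absolutelyContinuous.trans <|
      .finsetSum fun k => withDensity_absolutelyContinuous _ _
  · exact (Measure.AbsolutelyContinuous.finsetSum fun k =>
      M.absolutelyContinuous_withDensity_rowSum (Q k) k).smul_right (by simp)
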